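/- arXiv:2206.01383 — 2 statements merged into one kernel-verified Lean document; each statement's English description precedes it below -/
import Mathlib

section
/- If p : Y → X is a local homeomorphism and X is simply connected and locally path-connected, and p is a covering map, then p is a trivial covering: Y is homeomorphic over X to a disjoint union of copies of X indexed by a fiber. -/
/-!
By the lifting criterion, the identity of the simply connected, locally path-connected space `X`
lifts through `p` to a unique continuous section passing through any given point of `Y`. Every
point therefore lies on exactly one section; the range of each section is open, since a
continuous section of a local homeomorphism is an open embedding. Sending a point to the section
through it and to its image under `p` is thus a homeomorphism onto the product of the discrete
set of sections with `X`.
-/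

open Set

variable {E X : Type*} [TopologicalSpace E] [TopologicalSpace X] {p : E → X}

theorem IsLocalHomeomorph.isOpen_range_of_comp_eq_id (hp : IsLocalHomeomorph p) {s : X → E}
    (hs : Continuous s) (hps : p ∘ s = id) : IsOpen (range s) :=
  (hp.isOpenEmbedding_of_comp (hps ▸ .id) hs).isOpen_range

variable (p) in
/-- Continuous global sections of `p`, with the discrete topology rather than the compact-open
one. -/
def ContinuousSection : Type _ := {s : C(X, E) // p ∘ s = id}

instance : TopologicalSpace (ContinuousSection p) := ⊥

instance : DiscreteTopology (ContinuousSection p) := ⟨rfl⟩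

namespace IsCoveringMap

variable [SimplyConnectedSpace X] [LocallyPathConnectedSpace X] (hp : IsCoveringMap p)
include hp

theorem existsUnique_section (e : E) : ∃! s : C(X, E), s (p e) = e ∧ p ∘ s = id :=
  hp.existsUnique_continuousMap_lifts (ContinuousMap.id X) (p e) e rfl

noncomputable def sectionThrough (e : E) : ContinuousSection p :=
  ⟨(hp.existsUnique_section e).exists.choose, (hp.existsUnique_section e).exists.choose_spec.2⟩

theorem sectionThrough_apply_self (e : E) : (hp.sectionThrough e).1 (p e) = e :=
  (hp.existsUnique_section e).exists.choose_spec.1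

theorem sectionThrough_apply (s : ContinuousSection p) (x : X) :
    hp.sectionThrough (s.1 x) = s := by
  have hpsx : p (s.1 x) = x := congrFun s.2 x
  refine Subtype.ext ((hp.existsUnique_section (s.1 x)).unique
    ⟨hp.sectionThrough_apply_self _, (hp.sectionThrough _).2⟩ ⟨?_, s.2⟩)
  rw [hpsx]

theorem continuous_sectionThrough : Continuous hp.sectionThrough := by
  refine continuous_discrete_rng.2 fun s => ?_
  have hfiber : hp.sectionThrough ⁻¹' {s} = range s.1 := by
    ext e
    refine ⟨fun he => ⟨p e, he ▸ hp.sectionThrough_apply_self e⟩, ?_⟩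
    rintro ⟨x, rfl⟩
    exact hp.sectionThrough_apply s x
  rw [hfiber]
  exact hp.isLocalHomeomorph.isOpen_range_of_comp_eq_id s.1.continuous s.2

noncomputable def homeomorphContinuousSectionProd : E ≃ₜ ContinuousSection p × X where
  toFun e := (hp.sectionThrough e, p e)
  invFun z := z.1.1 z.2
  left_inv := hp.sectionThrough_apply_self
  right_inv z := Prod.ext (hp.sectionThrough_apply z.1 z.2) (congrFun z.1.2 z.2)
  continuous_toFun := hp.continuous_sectionThrough.prodMk hp.continuous
  continuous_invFun := continuous_prod_of_discrete_left.2 fun s => s.1.continuous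

end IsCoveringMap

universe u

theorem coveringMap_trivial_of_simplyConnected_general {Y X : Type u} [TopologicalSpace Y]
    [TopologicalSpace X] [SimplyConnectedSpace X] [LocallyPathConnectedSpace X]
    (p : Y → X) (hp : IsCoveringMap p) :
    ∃ (J : Type u),
      letI : TopologicalSpace J := ⊥
      ∃ h : Y ≃ₜ J × X, ∀ y, (h y).2 = p y :=
  ⟨ContinuousSection p, hp.homeomorphContinuousSectionProd, fun _ => rfl⟩

/-- If `p : Y → X` is a local homeomorphism and a covering map, and `X` is simply connected
and locally path-connected, then `p` is a trivial covering: `Y` is homeomorphic over `X` to a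
disjoint union of copies of `X` indexed by some (discrete) set `J`. -/
theorem coveringMap_trivial_of_simplyConnected {Y X : Type u} [TopologicalSpace Y]
    [TopologicalSpace X] [SimplyConnectedSpace X] [LocallyPathConnectedSpace X]
    (p : Y → X) (hloc : IsLocalHomeomorph p) (hp : IsCoveringMap p) :
    ∃ (J : Type u),
      letI : TopologicalSpace J := ⊥
      ∃ h : Y ≃ₜ J × X, ∀ y, (h y).2 = p y :=
  coveringMap_trivial_of_simplyConnected_general p hp
end

section
/- Let X be a topological space which is the union of two closed subspaces Z₁ and Z₂ with intersection Z. Given local homeomorphisms E₁ → Z₁ and E₂ → Z₂ together with a homeomorphism over Z between their restrictions to Z, the space obtained by gluing E₁ and E₂ along this identification admits a natural local homeomorphism to X restricting to the given ones on Z₁ and Z₂. -/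
/-!
The projection `q` from the glued space `G` to `X` is continuous, open and locally injective.
It is open because a point of `X` lying over `Zᵢ` is the image of a point of `Eᵢ`, so `q(O) ∩ Zᵢ`
is the image of an open set under `pᵢ`, and a set whose traces on the closed cover `Z₁, Z₂` are
relatively open is open. For local injectivity, given open sets `U₁ ⊆ E₁`, `U₂ ⊆ E₂` on which
`p₁`, `p₂` are injective, consider the points of `G` all of whose representatives lie in
`U₁ ⊔ U₂`. Its trace on `E₁` is `U₁` minus the points of `p₁⁻¹ Z₂` that `φ` sends outside `U₂`;
since `p₁⁻¹ Z₂` is closed and `φ` continuous, this is open, and symmetrically on `E₂`.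
-/

open Set Topology

lemma isOpen_of_isOpen_preimage_val_of_isClosed_cover {X : Type*} [TopologicalSpace X]
    {Z₁ Z₂ : Set X} (hZ₁ : IsClosed Z₁) (hZ₂ : IsClosed Z₂) (hcov : Z₁ ∪ Z₂ = univ) {S : Set X}
    (h₁ : IsOpen ((↑) ⁻¹' S : Set Z₁)) (h₂ : IsOpen ((↑) ⁻¹' S : Set Z₂)) : IsOpen S := by
  have hS : Sᶜ = ((↑) '' ((↑) ⁻¹' Sᶜ : Set Z₁)) ∪ ((↑) '' ((↑) ⁻¹' Sᶜ : Set Z₂)) := by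
    rw [Subtype.image_preimage_coe, Subtype.image_preimage_coe, ← union_inter_distrib_right,
      hcov, univ_inter]
  rw [← isClosed_compl_iff, hS]
  exact (h₁.isClosed_compl.trans hZ₁).union (h₂.isClosed_compl.trans hZ₂)

lemma isOpen_setOf_forall_mem_of_isClosed {Y : Type*} [TopologicalSpace Y] {P : Y → Prop}
    (hP : IsClosed {y | P y}) {O : Set (Subtype P)} (hO : IsOpen O) :
    IsOpen {y | ∀ h : P y, (⟨y, h⟩ : Subtype P) ∈ O} := by
  obtain ⟨A, hA, rfl⟩ := isOpen_induced_iff.mp hO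
  convert hA.union hP.isOpen_compl using 1
  ext y
  by_cases hy : P y <;> simp [hy]

lemma IsLocallyInjective.exists_isOpen_injOn_forall_mem {E Y : Type*} [TopologicalSpace E]
    {f : E → Y} (hf : IsLocallyInjective f) {P : Prop} (x : P → E) :
    ∃ U, IsOpen U ∧ (∀ h, x h ∈ U) ∧ U.InjOn f := by
  by_cases h : P
  · obtain ⟨U, hU, hxU, hinj⟩ := hf (x h)
    exact ⟨U, hU, fun _ => hxU, hinj⟩
  · exact ⟨∅, isOpen_empty, fun h' => absurd h' h, injOn_empty f⟩

lemma IsLocalHomeomorph.of_isLocallyInjective {E Y : Type*} [TopologicalSpace E]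
    [TopologicalSpace Y] {f : E → Y} (hc : Continuous f) (ho : IsOpenMap f)
    (hi : IsLocallyInjective f) : IsLocalHomeomorph f :=
  isLocalHomeomorph_iff_isOpenEmbedding_restrict.mpr fun x => by
    obtain ⟨U, hU, hxU, hinj⟩ := hi x
    exact ⟨U, hU.mem_nhds hxU, .of_continuous_injective_isOpenMap
      (hc.comp continuous_subtype_val) hinj.injective (ho.comp hU.isOpenMap_subtype_val)⟩

section

variable {X E₁ E₂ : Type*} [TopologicalSpace E₁] [TopologicalSpace E₂]
  {Z₁ Z₂ : Set X} {p₁ : E₁ → Z₁} {p₂ : E₂ → Z₂}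
  (φ : {e : E₁ // (p₁ e : X) ∈ Z₂} ≃ₜ {e : E₂ // (p₂ e : X) ∈ Z₁})

def GlueRel (a b : E₁ ⊕ E₂) : Prop :=
  ∃ e : {e : E₁ // (p₁ e : X) ∈ Z₂}, a = Sum.inl e.1 ∧ b = Sum.inr (φ e).1

abbrev Glued := Quot (GlueRel φ)

namespace Glued

def inl (a : E₁) : Glued φ := Quot.mk _ (Sum.inl a)

def inr (b : E₂) : Glued φ := Quot.mk _ (Sum.inr b)

lemma inl_eq_inr (c : {e : E₁ // (p₁ e : X) ∈ Z₂}) : inl φ c.1 = inr φ (φ c).1 :=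
  Quot.sound ⟨c, rfl, rfl⟩

lemma inl_symm_eq_inr (c : {e : E₂ // (p₂ e : X) ∈ Z₁}) : inl φ (φ.symm c).1 = inr φ c.1 := by
  simpa using inl_eq_inr φ (φ.symm c)

def proj (hφ : ∀ e, (p₂ (φ e).1 : X) = p₁ e.1) : Glued φ → X :=
  Quot.lift (Sum.elim (fun a => (p₁ a : X)) fun b => (p₂ b : X)) <| by
    rintro _ _ ⟨c, rfl, rfl⟩
    exact (hφ c).symm

variable (hφ : ∀ e, (p₂ (φ e).1 : X) = p₁ e.1)

lemma continuous_proj [TopologicalSpace X] (hp₁ : Continuous p₁) (hp₂ : Continuous p₂) :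
    Continuous (proj φ hφ) :=
  continuous_quot_lift _ ((continuous_subtype_val.comp hp₁).sumElim
    (continuous_subtype_val.comp hp₂))

lemma exists_inl_eq_of_proj_mem {t : Glued φ} (ht : proj φ hφ t ∈ Z₁) : ∃ a, inl φ a = t := by
  induction t using Quot.ind with
  | mk x =>
    rcases x with a | b
    · exact ⟨a, rfl⟩
    · exact ⟨_, inl_symm_eq_inr φ ⟨b, ht⟩⟩

lemma exists_inr_eq_of_proj_mem {t : Glued φ} (ht : proj φ hφ t ∈ Z₂) : ∃ b, inr φ b = t := by
  induction t using Quot.ind with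
  | mk x =>
    rcases x with a | b
    · exact ⟨_, (inl_eq_inr φ ⟨a, ht⟩).symm⟩
    · exact ⟨b, rfl⟩

lemma preimage_val_proj_image_eq₁ (O : Set (Glued φ)) :
    ((↑) ⁻¹' (proj φ hφ '' O) : Set Z₁) = p₁ '' (inl φ ⁻¹' O) := by
  ext z
  constructor
  · rintro ⟨t, ht, hz⟩
    obtain ⟨a, rfl⟩ := exists_inl_eq_of_proj_mem φ hφ (hz ▸ z.2)
    exact ⟨a, ht, Subtype.ext hz⟩
  · rintro ⟨a, ha, rfl⟩
    exact ⟨inl φ a, ha, rfl⟩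

lemma preimage_val_proj_image_eq₂ (O : Set (Glued φ)) :
    ((↑) ⁻¹' (proj φ hφ '' O) : Set Z₂) = p₂ '' (inr φ ⁻¹' O) := by
  ext z
  constructor
  · rintro ⟨t, ht, hz⟩
    obtain ⟨b, rfl⟩ := exists_inr_eq_of_proj_mem φ hφ (hz ▸ z.2)
    exact ⟨b, ht, Subtype.ext hz⟩
  · rintro ⟨b, hb, rfl⟩
    exact ⟨inr φ b, hb, rfl⟩

lemma isOpenMap_proj [TopologicalSpace X] (hZ₁ : IsClosed Z₁) (hZ₂ : IsClosed Z₂)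
    (hcov : Z₁ ∪ Z₂ = univ) (hp₁ : IsOpenMap p₁) (hp₂ : IsOpenMap p₂) : IsOpenMap (proj φ hφ) := by
  intro O hO
  apply isOpen_of_isOpen_preimage_val_of_isClosed_cover hZ₁ hZ₂ hcov
  · rw [preimage_val_proj_image_eq₁]
    exact hp₁ _ (hO.preimage (continuous_quot_mk.comp continuous_inl))
  · rw [preimage_val_proj_image_eq₂]
    exact hp₂ _ (hO.preimage (continuous_quot_mk.comp continuous_inr))

/-- The points all of whose representatives lie in `U₁ ⊔ U₂`, written as a lift so that its
preimages in `E₁` and `E₂` are definitional. -/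
def repsIn (U₁ : Set E₁) (U₂ : Set E₂) : Set (Glued φ) :=
  {t | Quot.lift (Sum.elim (fun a => a ∈ U₁ ∧ ∀ h, (φ ⟨a, h⟩).1 ∈ U₂)
      (fun b => b ∈ U₂ ∧ ∀ h, (φ.symm ⟨b, h⟩).1 ∈ U₁)) (by
    rintro _ _ ⟨c, rfl, rfl⟩
    exact propext ⟨fun hc => ⟨hc.2 c.2, fun _ => by simpa using hc.1⟩,
      fun hc => ⟨by simpa using hc.2 (φ c).2, fun _ => hc.1⟩⟩) t}

lemma mem_repsIn_inl {U₁ : Set E₁} {U₂ : Set E₂} {a : E₁} :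
    inl φ a ∈ repsIn φ U₁ U₂ ↔ a ∈ U₁ ∧ ∀ h, (φ ⟨a, h⟩).1 ∈ U₂ :=
  Iff.rfl

lemma mem_repsIn_inr {U₁ : Set E₁} {U₂ : Set E₂} {b : E₂} :
    inr φ b ∈ repsIn φ U₁ U₂ ↔ b ∈ U₂ ∧ ∀ h, (φ.symm ⟨b, h⟩).1 ∈ U₁ :=
  Iff.rfl

lemma isOpen_repsIn [TopologicalSpace X] (hZ₁ : IsClosed Z₁) (hZ₂ : IsClosed Z₂)
    (hp₁ : Continuous p₁) (hp₂ : Continuous p₂) {U₁ : Set E₁} {U₂ : Set E₂} (hU₁ : IsOpen U₁)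
    (hU₂ : IsOpen U₂) :
    IsOpen (repsIn φ U₁ U₂) := by
  rw [← isQuotientMap_quot_mk.isOpen_preimage, isOpen_sum_iff]
  exact ⟨hU₁.inter <| isOpen_setOf_forall_mem_of_isClosed
      (hZ₂.preimage (continuous_subtype_val.comp hp₁))
      (hU₂.preimage (continuous_subtype_val.comp φ.continuous)),
    hU₂.inter <| isOpen_setOf_forall_mem_of_isClosed
      (hZ₁.preimage (continuous_subtype_val.comp hp₂))
      (hU₁.preimage (continuous_subtype_val.comp φ.symm.continuous))⟩

lemma injOn_proj_repsIn {U₁ : Set E₁} {U₂ : Set E₂} (hU₁ : U₁.InjOn p₁) (hU₂ : U₂.InjOn p₂) :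
    (repsIn φ U₁ U₂).InjOn (proj φ hφ) := by
  have mixed : ∀ a b, inl φ a ∈ repsIn φ U₁ U₂ → inr φ b ∈ repsIn φ U₁ U₂ →
      (p₁ a : X) = p₂ b → inl φ a = inr φ b := by
    intro a b ha hb hab
    have hz : (p₁ a : X) ∈ Z₂ := hab ▸ (p₂ b).2
    have hφa : (φ ⟨a, hz⟩).1 = b := hU₂ (ha.2 hz) hb.1 (Subtype.ext ((hφ _).trans hab))
    exact hφa ▸ inl_eq_inr φ ⟨a, hz⟩
  intro t ht t' ht' htt'
  induction t using Quot.ind with | mk x => ?_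
  induction t' using Quot.ind with | mk x' => ?_
  rcases x with a | b <;> rcases x' with a' | b'
  · exact congrArg (inl φ) (hU₁ ht.1 ht'.1 (Subtype.ext htt'))
  · exact mixed a b' ht ht' htt'
  · exact (mixed a' b ht' ht htt'.symm).symm
  · exact congrArg (inr φ) (hU₂ ht.1 ht'.1 (Subtype.ext htt'))

lemma isLocallyInjective_proj [TopologicalSpace X] (hZ₁ : IsClosed Z₁) (hZ₂ : IsClosed Z₂)
    (hp₁ : IsLocalHomeomorph p₁) (hp₂ : IsLocalHomeomorph p₂) :
    IsLocallyInjective (proj φ hφ) := by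
  intro t
  induction t using Quot.ind with | mk x => ?_
  rcases x with a | b
  · obtain ⟨U₁, hU₁, ha, hinj₁⟩ := hp₁.isLocallyInjective a
    obtain ⟨U₂, hU₂, hφa, hinj₂⟩ :=
      hp₂.isLocallyInjective.exists_isOpen_injOn_forall_mem fun h => (φ ⟨a, h⟩).1
    exact ⟨repsIn φ U₁ U₂, isOpen_repsIn φ hZ₁ hZ₂ hp₁.continuous hp₂.continuous hU₁ hU₂,
      (mem_repsIn_inl φ).2 ⟨ha, hφa⟩, injOn_proj_repsIn φ hφ hinj₁ hinj₂⟩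
  · obtain ⟨U₂, hU₂, hb, hinj₂⟩ := hp₂.isLocallyInjective b
    obtain ⟨U₁, hU₁, hφb, hinj₁⟩ :=
      hp₁.isLocallyInjective.exists_isOpen_injOn_forall_mem fun h => (φ.symm ⟨b, h⟩).1
    exact ⟨repsIn φ U₁ U₂, isOpen_repsIn φ hZ₁ hZ₂ hp₁.continuous hp₂.continuous hU₁ hU₂,
      (mem_repsIn_inr φ).2 ⟨hb, hφb⟩, injOn_proj_repsIn φ hφ hinj₁ hinj₂⟩

end Glued

end

/-- Let `X = Z₁ ∪ Z₂` with `Z₁, Z₂` closed and `Z = Z₁ ∩ Z₂`. Given local homeomorphisms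
`p₁ : E₁ → Z₁` and `p₂ : E₂ → Z₂` together with a homeomorphism over `Z` between their
restrictions to `Z`, the space obtained by gluing `E₁` and `E₂` along this identification
admits a natural local homeomorphism to `X` restricting to the given ones on `Z₁`, `Z₂`. -/
theorem glue_etale_over_closed_union {X E₁ E₂ : Type u} [TopologicalSpace X]
    [TopologicalSpace E₁] [TopologicalSpace E₂]
    (Z₁ Z₂ : Set X) (hZ₁ : IsClosed Z₁) (hZ₂ : IsClosed Z₂) (hcov : Z₁ ∪ Z₂ = Set.univ)
    (p₁ : E₁ → Z₁) (p₂ : E₂ → Z₂)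
    (hp₁ : IsLocalHomeomorph p₁) (hp₂ : IsLocalHomeomorph p₂)
    (φ : {e : E₁ // (p₁ e : X) ∈ Z₂} ≃ₜ {e : E₂ // (p₂ e : X) ∈ Z₁})
    (hφ : ∀ e, ((p₂ (φ e).1 : X)) = ((p₁ e.1 : X))) :
    ∃ q : Quot (fun a b : E₁ ⊕ E₂ =>
        ∃ e : {e : E₁ // (p₁ e : X) ∈ Z₂}, a = Sum.inl e.1 ∧ b = Sum.inr (φ e).1) → X,
      (∀ e₁ : E₁, q (Quot.mk _ (Sum.inl e₁)) = (p₁ e₁ : X)) ∧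
      (∀ e₂ : E₂, q (Quot.mk _ (Sum.inr e₂)) = (p₂ e₂ : X)) ∧
      IsLocalHomeomorph q :=
  ⟨Glued.proj φ hφ, fun _ => rfl, fun _ => rfl,
    .of_isLocallyInjective (Glued.continuous_proj φ hφ hp₁.continuous hp₂.continuous)
      (Glued.isOpenMap_proj φ hφ hZ₁ hZ₂ hcov hp₁.isOpenMap hp₂.isOpenMap)
      (Glued.isLocallyInjective_proj φ hφ hZ₁ hZ₂ hp₁ hp₂)⟩
end
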